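/- arXiv:1901.10727 — 2 statements merged into one kernel-verified Lean document; each statement's English description precedes it below -/
import Mathlib

section
/- Let G be a topological group containing a subspace X homeomorphic to an uncountable subspace of the Sorgenfrey line ℝₗ. Then the spread of G is at least the spread of X × X, i.e., s(G) ≥ s(X × X). -/
open Set Topology

def SorgenfreyLine : Type := ℝ

notation "ℝₗ" => SorgenfreyLine

noncomputable instance : Field ℝₗ := inferInstanceAs (Field ℝ)

noncomputable instance : LinearOrder ℝₗ := inferInstanceAs (LinearOrder ℝ)

instance : IsStrictOrderedRing ℝₗ := inferInstanceAs (IsStrictOrderedRing ℝ)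

instance : TopologicalSpace ℝₗ :=
  TopologicalSpace.generateFrom {s : Set ℝₗ | ∃ a b : ℝₗ, a < b ∧ s = Set.Ico a b}

/-- The spread of a topological space: the supremum of cardinalities of discrete subspaces. -/
noncomputable def spread (X : Type*) [TopologicalSpace X] : Cardinal :=
  sSup {c : Cardinal | ∃ D : Set X, DiscreteTopology D ∧ Cardinal.mk D = c}

def Cometrizable (Y : Type*) [t : TopologicalSpace Y] : Prop :=
  ∃ τ : TopologicalSpace Y, t ≤ τ ∧ @TopologicalSpace.MetrizableSpace Y τ ∧
    ∀ y : Y, ∀ U ∈ nhds y, ∃ V ∈ nhds y, V ⊆ U ∧ IsClosed[τ] V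

def IsKDense {X : Type*} [TopologicalSpace X] (D : Set X) : Prop :=
  ∀ K : Set X, IsCompact K → ∃ K' : Set X, IsCompact K' ∧ K ⊆ K' ∧ K' ⊆ closure (D ∩ K')

def KSeparable (X : Type*) [TopologicalSpace X] : Prop :=
  ∃ D : Set X, D.Countable ∧ IsKDense D

/-!
Let `φ : X → G` be the embedding and `f (x, y) = φ x * (φ y)⁻¹`. Each point `d` of a discrete
`D ⊆ X × X` is isolated by a Sorgenfrey box `[d₁, d₁ + ρ) × [d₂, d₂ + ρ)`. Since
`f e * φ e₂ = φ e₁`, `(f e)⁻¹ * φ e₁ = φ e₂` and `[a, ∞)` is a neighbourhood of `a`, continuity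
of the group operations gives a neighbourhood `N` of `f d` such that `d₁ ≤ e₁ ↔ d₂ ≤ e₂` for all
`e` close to `d` with `f e ∈ N`. Sorting the points of `D` by a rational radius `ρ` and a
rational box of side `ρ` containing them splits `D` into countably many pieces; within a piece,
`f e ∈ N` makes `d` and `e` comparable in the product order, hence equal. So `f` is injective
with discrete image on each piece, and `|D| ≤ ℵ₀ · s(G) = s(G)`; here `s(G) ≥ ℵ₀` because `X`
contains a monotone sequence, which is discrete in `ℝₗ`.
-/

open Filter Cardinal

instance : Archimedean ℝₗ := inferInstanceAs (Archimedean ℝ)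

theorem isDiscrete_iff_forall_exists_mem_nhds {α : Type*} [TopologicalSpace α] {s : Set α} :
    IsDiscrete s ↔ ∀ x ∈ s, ∃ U ∈ 𝓝 x, ∀ y ∈ s, y ∈ U → y = x := by
  refine ⟨fun hs x hx => ?_, fun h => .of_nhdsWithin fun x hx => ?_⟩
  · obtain ⟨U, hU, hUs⟩ := mem_nhdsWithin_iff_exists_mem_nhds_inter.1
      (hs.nhdsWithin x hx ▸ mem_pure.2 rfl : {x} ∈ 𝓝[s] x)
    exact ⟨U, hU, fun y hy hyU => hUs ⟨hyU, hy⟩⟩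
  · obtain ⟨U, hU, hUs⟩ := h x hx
    exact le_pure_iff.2 (mem_nhdsWithin_iff_exists_mem_nhds_inter.2
      ⟨U, hU, fun y hy => hUs y hy.2 hy.1⟩)

section Spread

variable {X : Type*} [TopologicalSpace X]

theorem bddAbove_discrete_cardinals :
    BddAbove {c : Cardinal | ∃ D : Set X, DiscreteTopology D ∧ #D = c} :=
  ⟨#X, by rintro _ ⟨D, -, rfl⟩; exact mk_set_le D⟩

theorem mk_le_spread {D : Set X} (hD : IsDiscrete D) : #D ≤ spread X :=
  le_csSup bddAbove_discrete_cardinals ⟨D, isDiscrete_iff_discreteTopology.1 hD, rfl⟩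

theorem lift_spread_le {c : Cardinal} (h : ∀ D : Set X, IsDiscrete D → lift.{v} #D ≤ c) :
    lift.{v} (spread X) ≤ c := by
  rw [spread, lift_sSup bddAbove_discrete_cardinals]
  refine csSup_le' ?_
  rintro _ ⟨_, ⟨D, hD, rfl⟩, rfl⟩
  exact h D (isDiscrete_iff_discreteTopology.2 hD)

end Spread

theorem Topology.IsInducing.lift_spread_le {X : Type u} {Y : Type v} [TopologicalSpace X]
    [TopologicalSpace Y] {f : X → Y} (hf : IsInducing f) (hf' : Function.Injective f) :
    lift.{v} (spread X) ≤ lift.{u} (spread Y) :=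
  _root_.lift_spread_le fun D hD => by
    rw [← mk_image_eq_of_injOn_lift f D hf'.injOn, Cardinal.lift_le]
    exact mk_le_spread (hD.image hf)

theorem lift_mk_iUnion_le_of_countable {α ι : Type u} [Countable ι] {f : ι → Set α}
    {a : Cardinal.{max u v}} (ha : ℵ₀ ≤ a) (h : ∀ i, lift.{v} #(f i) ≤ a) :
    lift.{v} #(⋃ i, f i) ≤ a :=
  calc lift.{v} #(⋃ i, f i) ≤ lift.{v} (#ι * ⨆ i, #(f i)) := lift_le.2 (mk_iUnion_le f)
    _ = lift.{v} #ι * ⨆ i, lift.{v} #(f i) := by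
      rw [lift_mul, lift_iSup bddAbove_of_small]
    _ ≤ ℵ₀ * a := mul_le_mul' (lift_le_aleph0.2 mk_le_aleph0) (ciSup_le' h)
    _ = a := aleph0_mul_eq ha

namespace SorgenfreyLine

theorem isOpen_Ico (a b : ℝₗ) : IsOpen (Ico a b) := by
  rcases lt_or_ge a b with hab | hab
  · exact .basic _ ⟨a, b, hab, rfl⟩
  · rw [Ico_eq_empty (not_lt.mpr hab)]
    exact isOpen_empty

theorem exists_Ico_subset_of_isOpen {s : Set ℝₗ} (hs : IsOpen s) {a : ℝₗ} (ha : a ∈ s) :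
    ∃ δ > 0, Ico a (a + δ) ⊆ s := by
  induction hs generalizing a with
  | basic t ht =>
    obtain ⟨b, c, -, rfl⟩ := ht
    exact ⟨c - a, sub_pos.2 ha.2, fun y hy => ⟨ha.1.trans hy.1, by linarith [hy.2]⟩⟩
  | univ => exact ⟨1, one_pos, subset_univ _⟩
  | inter s t _ _ ihs iht =>
    obtain ⟨δ₁, hδ₁, hs⟩ := ihs ha.1
    obtain ⟨δ₂, hδ₂, ht⟩ := iht ha.2
    refine ⟨min δ₁ δ₂, lt_min hδ₁ hδ₂, subset_inter ?_ ?_⟩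
    · exact (Ico_subset_Ico_right (by simp)).trans hs
    · exact (Ico_subset_Ico_right (by simp)).trans ht
  | sUnion S _ ih =>
    obtain ⟨t, htS, hat⟩ := ha
    obtain ⟨δ, hδ, ht⟩ := ih t htS hat
    exact ⟨δ, hδ, ht.trans (subset_sUnion_of_mem htS)⟩

theorem nhds_basis_Ico (a : ℝₗ) : (𝓝 a).HasBasis (0 < ·) (fun δ => Ico a (a + δ)) := by
  refine ⟨fun t => ⟨fun ht => ?_, fun ⟨δ, hδ, hδt⟩ => ?_⟩⟩
  · obtain ⟨U, hUt, hU, haU⟩ := mem_nhds_iff.1 ht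
    obtain ⟨δ, hδ, hδU⟩ := exists_Ico_subset_of_isOpen hU haU
    exact ⟨δ, hδ, hδU.trans hUt⟩
  · exact mem_of_superset ((isOpen_Ico _ _).mem_nhds ⟨le_rfl, lt_add_of_pos_right a hδ⟩) hδt

theorem Ici_mem_nhds (a : ℝₗ) : Ici a ∈ 𝓝 a :=
  (nhds_basis_Ico a).mem_of_superset one_pos Ico_subset_Ici_self

theorem Ico_mem_nhds {a b : ℝₗ} (h : a < b) : Ico a b ∈ 𝓝 a :=
  (isOpen_Ico a b).mem_nhds ⟨le_rfl, h⟩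

theorem nhds_subtype_basis_Ico {X : Set ℝₗ} (x : X) :
    (𝓝 x).HasBasis (0 < ·) (fun δ => Subtype.val ⁻¹' Ico (x : ℝₗ) (x + δ)) :=
  nhds_subtype X x ▸ (nhds_basis_Ico (x : ℝₗ)).comap Subtype.val

theorem isDiscrete_range_of_strictMono {s : ℕ → ℝₗ} (hs : StrictMono s) :
    IsDiscrete (range s) := by
  refine isDiscrete_iff_forall_exists_mem_nhds.2 ?_
  rintro _ ⟨n, rfl⟩
  refine ⟨Ico (s n) (s (n + 1)), Ico_mem_nhds (hs n.lt_succ_self), ?_⟩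
  rintro _ ⟨m, rfl⟩ ⟨hnm, hmn⟩
  rw [hs.le_iff_le] at hnm
  rw [hs.lt_iff_lt] at hmn
  rw [le_antisymm (Nat.le_of_lt_succ hmn) hnm]

theorem isDiscrete_range_of_strictAnti {s : ℕ → ℝₗ} (hs : StrictAnti s) :
    IsDiscrete (range s) := by
  refine isDiscrete_iff_forall_exists_mem_nhds.2 ?_
  rintro _ ⟨n, rfl⟩
  refine ⟨Ici (s n) ∩ ⋂ m ∈ Iio n, Iio (s m), inter_mem (Ici_mem_nhds _) ?_, ?_⟩
  · exact (biInter_mem (Set.finite_Iio n)).2 fun m hm =>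
      mem_of_superset (Ico_mem_nhds (hs hm)) Ico_subset_Iio_self
  · rintro _ ⟨m, rfl⟩ ⟨hnm, hmn⟩
    rw [mem_Ici, hs.le_iff_ge] at hnm
    simp only [mem_iInter, mem_Iio, hs.lt_iff_gt] at hmn
    exact congrArg s (le_antisymm hnm (not_lt.1 fun h => (hmn m h).false))

theorem aleph0_le_spread {X : Set ℝₗ} (hX : X.Infinite) : ℵ₀ ≤ spread X := by
  have := hX.to_subtype
  obtain ⟨s, hs⟩ := Infinite.exists_strictMono_or_strictAnti X
  have hdisc : IsDiscrete (range (Subtype.val ∘ s)) := by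
    rcases hs with hs | hs
    · exact isDiscrete_range_of_strictMono (hs : StrictMono (Subtype.val ∘ s))
    · exact isDiscrete_range_of_strictAnti (hs : StrictAnti (Subtype.val ∘ s))
  have hrange : range s = Subtype.val ⁻¹' range (Subtype.val ∘ s) := by
    rw [range_comp, preimage_image_eq _ Subtype.val_injective]
  have hinf : (range s).Infinite :=
    infinite_range_of_injective (hs.elim StrictMono.injective StrictAnti.injective)
  calc ℵ₀ ≤ #(range s) := Cardinal.infinite_iff.1 hinf.to_subtype
    _ ≤ spread X := mk_le_spread (hrange ▸ hdisc.preimage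
      continuous_subtype_val.continuousOn Subtype.val_injective)

end SorgenfreyLine

open SorgenfreyLine

theorem IsDiscrete.exists_forall_le_eq {X Y : Set ℝₗ} {D : Set (X × Y)} (hD : IsDiscrete D)
    {d : X × Y} (hd : d ∈ D) :
    ∃ r > 0, ∀ e ∈ D, d ≤ e → (e.1 : ℝₗ) < d.1 + r → (e.2 : ℝₗ) < d.2 + r → e = d := by
  obtain ⟨U, hU, hUD⟩ := isDiscrete_iff_forall_exists_mem_nhds.1 hD d hd
  have hmono {x : ℝₗ} : Monotone fun δ : ℝₗ => Ico x (x + δ) := fun _ _ h =>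
    Ico_subset_Ico_right (by simpa using h)
  have hbasis := (nhds_subtype_basis_Ico d.1).prod_same_index_mono (nhds_subtype_basis_Ico d.2)
    (fun _ _ _ _ h => preimage_mono (hmono h)) (fun _ _ _ _ h => preimage_mono (hmono h))
  rw [← nhds_prod_eq] at hbasis
  obtain ⟨r, hr, hrU⟩ := hbasis.mem_iff.1 hU
  exact ⟨r, hr, fun e he hde h₁ h₂ => hUD e he (hrU ⟨⟨hde.1, h₁⟩, ⟨hde.2, h₂⟩⟩)⟩

section Group

variable {G : Type u} [Group G] [TopologicalSpace G] {X : Set ℝₗ} (φ : X → G) (D : Set (X × X))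

def IsAdmissibleRadius (d : X × X) (ρ : ℝₗ) : Prop :=
  d ∈ D ∧ (∀ e ∈ D, d ≤ e → (e.1 : ℝₗ) < d.1 + ρ → (e.2 : ℝₗ) < d.2 + ρ → e = d) ∧
    ∃ N ∈ 𝓝 (φ d.1 * (φ d.2)⁻¹), ∀ e : X × X, φ e.1 * (φ e.2)⁻¹ ∈ N →
      (e.1 : ℝₗ) < d.1 + ρ → (e.2 : ℝₗ) < d.2 + ρ → (d.1 ≤ e.1 ↔ d.2 ≤ e.2)

def admissibleBox (c : ℚ × ℚ × ℚ) : Set (X × X) :=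
  {d | IsAdmissibleRadius φ D d c.1 ∧ (d.1 : ℝₗ) ∈ Ico (c.2.1 : ℝₗ) (c.2.1 + c.1) ∧
    (d.2 : ℝₗ) ∈ Ico (c.2.2 : ℝₗ) (c.2.2 + c.1)}

variable {φ D}

theorem IsAdmissibleRadius.mono {d : X × X} {ρ ρ' : ℝₗ} (h : IsAdmissibleRadius φ D d ρ)
    (hρ' : ρ' ≤ ρ) : IsAdmissibleRadius φ D d ρ' := by
  obtain ⟨hdD, hiso, N, hN, hNle⟩ := h
  refine ⟨hdD, fun e he hde h₁ h₂ => hiso e he hde ?_ ?_,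
    N, hN, fun e he h₁ h₂ => hNle e he ?_ ?_⟩ <;> linarith

theorem exists_nhds_eq_of_mem_admissibleBox {c : ℚ × ℚ × ℚ} {d : X × X}
    (hd : d ∈ admissibleBox φ D c) :
    ∃ N ∈ 𝓝 (φ d.1 * (φ d.2)⁻¹), ∀ e ∈ admissibleBox φ D c, φ e.1 * (φ e.2)⁻¹ ∈ N → e = d := by
  obtain ⟨⟨hdD, hiso, N, hN, hNle⟩, ⟨hp₁, hp₂⟩, ⟨hq₁, hq₂⟩⟩ := hd
  refine ⟨N, hN, ?_⟩
  rintro e ⟨⟨heD, hiso', -⟩, ⟨hp₁', hp₂'⟩, ⟨hq₁', hq₂'⟩⟩ he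
  have hle_iff := hNle e he (by linarith) (by linarith)
  -- `d` and `e` are comparable in the product order, so isolation of the smaller one applies
  by_cases h₁ : d.1 ≤ e.1
  · exact hiso e heD ⟨h₁, hle_iff.1 h₁⟩ (by linarith) (by linarith)
  · have h₂ : ¬ d.2 ≤ e.2 := fun h => h₁ (hle_iff.2 h)
    exact (hiso' d hdD ⟨(not_le.1 h₁).le, (not_le.1 h₂).le⟩ (by linarith) (by linarith)).symm

theorem injOn_admissibleBox (c : ℚ × ℚ × ℚ) :
    InjOn (fun d : X × X => φ d.1 * (φ d.2)⁻¹) (admissibleBox φ D c) := by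
  intro d hd e he (hde : φ d.1 * (φ d.2)⁻¹ = φ e.1 * (φ e.2)⁻¹)
  obtain ⟨N, hN, hNeq⟩ := exists_nhds_eq_of_mem_admissibleBox hd
  exact (hNeq e he (hde ▸ mem_of_mem_nhds hN)).symm

theorem isDiscrete_image_admissibleBox (c : ℚ × ℚ × ℚ) :
    IsDiscrete ((fun d : X × X => φ d.1 * (φ d.2)⁻¹) '' admissibleBox φ D c) := by
  refine isDiscrete_iff_forall_exists_mem_nhds.2 ?_
  rintro _ ⟨d, hd, rfl⟩
  obtain ⟨N, hN, hNeq⟩ := exists_nhds_eq_of_mem_admissibleBox hd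
  exact ⟨N, hN, by rintro _ ⟨e, he, rfl⟩ heN; rw [hNeq e he heN]⟩

variable [IsTopologicalGroup G]

theorem exists_nhds_forall_mul_eq_mem {Y : Type*} [TopologicalSpace Y] {ψ : Y → G}
    (hψ : IsInducing ψ) {g : G} {a b : Y} (hab : g * ψ b = ψ a) {s : Set Y} (hs : s ∈ 𝓝 a) :
    ∃ N ∈ 𝓝 g, ∃ t ∈ 𝓝 b, ∀ h ∈ N, ∀ y ∈ t, ∀ x, h * ψ y = ψ x → x ∈ s := by
  obtain ⟨V, hV, hVs⟩ := mem_comap.1 (hψ.nhds_eq_comap a ▸ hs)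
  have hmul : Tendsto (fun p : G × Y => p.1 * ψ p.2) (𝓝 g ×ˢ 𝓝 b) (𝓝 (ψ a)) := by
    rw [← nhds_prod_eq, ← hab]
    exact (continuous_fst.mul (hψ.continuous.comp continuous_snd)).continuousAt
  obtain ⟨N, hN, t, ht, hNt⟩ := mem_prod_iff.1 (hmul hV)
  exact ⟨N, hN, t, ht, fun h hh y hy x hx => hVs (show ψ x ∈ V from hx ▸ @hNt (h, y) ⟨hh, hy⟩)⟩

theorem exists_nhds_le_iff_le (hφ : IsInducing φ) (d : X × X) :
    ∃ δ > 0, ∃ N ∈ 𝓝 (φ d.1 * (φ d.2)⁻¹), ∀ e : X × X, φ e.1 * (φ e.2)⁻¹ ∈ N →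
      (e.1 : ℝₗ) < d.1 + δ → (e.2 : ℝₗ) < d.2 + δ → (d.1 ≤ e.1 ↔ d.2 ≤ e.2) := by
  obtain ⟨a, b⟩ := d
  have hIci (x : X) : {y : X | x ≤ y} ∈ 𝓝 x :=
    continuous_subtype_val.continuousAt.preimage_mem_nhds (SorgenfreyLine.Ici_mem_nhds (x : ℝₗ))
  obtain ⟨N₁, hN₁, t₁, ht₁, h₁⟩ :=
    exists_nhds_forall_mul_eq_mem hφ (g := φ a * (φ b)⁻¹) (b := b) (by group) (hIci a)
  obtain ⟨N₂, hN₂, t₂, ht₂, h₂⟩ :=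
    exists_nhds_forall_mul_eq_mem hφ (g := (φ a * (φ b)⁻¹)⁻¹) (b := a) (by group) (hIci b)
  obtain ⟨δ₁, hδ₁, hδ₁t⟩ := (nhds_subtype_basis_Ico b).mem_iff.1 ht₁
  obtain ⟨δ₂, hδ₂, hδ₂t⟩ := (nhds_subtype_basis_Ico a).mem_iff.1 ht₂
  refine ⟨min δ₁ δ₂, lt_min hδ₁ hδ₂, N₁ ∩ (·⁻¹) ⁻¹' N₂,
    inter_mem hN₁ (continuous_inv.continuousAt.preimage_mem_nhds hN₂), ?_⟩
  rintro ⟨x, y⟩ ⟨hN₁xy, hN₂xy⟩ hx hy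
  constructor
  · intro hax
    exact h₂ _ hN₂xy x (hδ₂t ⟨hax, hx.trans_le (by simp)⟩) y (by group)
  · intro hby
    exact h₁ _ hN₁xy y (hδ₁t ⟨hby, hy.trans_le (by simp)⟩) x (by group)

theorem exists_isAdmissibleRadius (hφ : IsInducing φ) (hD : IsDiscrete D) {d : X × X}
    (hd : d ∈ D) : ∃ ρ > 0, IsAdmissibleRadius φ D d ρ := by
  obtain ⟨r, hr, hiso⟩ := hD.exists_forall_le_eq hd
  obtain ⟨δ, hδ, N, hN, hNle⟩ := exists_nhds_le_iff_le hφ d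
  have hρr : min r δ ≤ r := min_le_left r δ
  have hρδ : min r δ ≤ δ := min_le_right r δ
  refine ⟨min r δ, lt_min hr hδ, hd, fun e he hde h₁ h₂ => hiso e he hde ?_ ?_,
    N, hN, fun e he h₁ h₂ => hNle e he ?_ ?_⟩ <;> linarith

theorem exists_mem_admissibleBox (hφ : IsInducing φ) (hD : IsDiscrete D) {d : X × X}
    (hd : d ∈ D) : ∃ c, d ∈ admissibleBox φ D c := by
  obtain ⟨ρ, hρ, hadm⟩ := exists_isAdmissibleRadius hφ hD hd
  obtain ⟨ρ', hρ'₀, hρ'ρ⟩ := exists_rat_btwn hρ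
  obtain ⟨p, hp₁, hp₂⟩ := exists_rat_btwn (sub_lt_self (d.1 : ℝₗ) hρ'₀)
  obtain ⟨q, hq₁, hq₂⟩ := exists_rat_btwn (sub_lt_self (d.2 : ℝₗ) hρ'₀)
  exact ⟨(ρ', p, q), hadm.mono hρ'ρ.le, ⟨hp₂.le, by linarith⟩, ⟨hq₂.le, by linarith⟩⟩

theorem lift_mk_le_spread_of_isDiscrete (hφ : IsInducing φ) (hD : IsDiscrete D)
    (hG : ℵ₀ ≤ spread G) : lift.{u} #D ≤ spread G := by
  have hcover : D ⊆ ⋃ c, admissibleBox φ D c := fun d hd =>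
    mem_iUnion.2 (exists_mem_admissibleBox hφ hD hd)
  refine (lift_le.2 (mk_le_mk_of_subset hcover)).trans
    (lift_mk_iUnion_le_of_countable hG fun c => ?_)
  rw [← mk_image_eq_of_injOn_lift _ _ (injOn_admissibleBox c), lift_uzero]
  exact mk_le_spread (isDiscrete_image_admissibleBox c)

end Group

/-- If a topological group $G$ contains a subspace homeomorphic to an uncountable subspace $X$
of the Sorgenfrey line, then $s(G) \ge s(X \times X)$. -/
theorem spread_ge_spread_square {G : Type u} [Group G] [TopologicalSpace G]
    [IsTopologicalGroup G] (X : Set ℝₗ) (hX : ¬ X.Countable)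
    (S : Set G) (h : Nonempty (S ≃ₜ X)) :
    Cardinal.lift.{u} (spread (X × X)) ≤ Cardinal.lift.{0} (spread G) := by
  obtain ⟨ψ⟩ := h
  have hφ : IsEmbedding (Subtype.val ∘ ψ.symm) := IsEmbedding.subtypeVal.comp ψ.symm.isEmbedding
  have hG : ℵ₀ ≤ spread G := by
    have hXG := hφ.isInducing.lift_spread_le hφ.injective
    rw [lift_uzero] at hXG
    exact (aleph0_le_lift.2 (aleph0_le_spread fun hfin => hX hfin.countable)).trans hXG
  rw [lift_uzero]
  exact lift_spread_le fun D hD => lift_mk_le_spread_of_isDiscrete hφ.isInducing hD hG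
end

section
/- The map χ : ℝₗ → C_k(ℝₗ, ℝ) assigning to each point x the characteristic function χ_x of the set [−x, ∞) (so χ_x(t) = 1 if t ≥ −x and χ_x(t) = 0 otherwise) is well defined (each χ_x is continuous on ℝₗ) and is a topological embedding of the Sorgenfrey line into the function space C_k(ℝₗ, ℝ) with the compact-open topology. -/
open Set Topology

/-!
Half-lines `[a, ∞)` are clopen and addition is continuous on the Sorgenfrey line, so
`(x, t) ↦ [-x ≤ t]` is jointly continuous and its currying `χ` is continuous into `C_k(ℝₗ, ℝ)`.
Conversely, a basic open set `[a, b)` is the preimage under `χ` of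
`{g | g (-a) > 1/2} ∩ {g | g (-b) < 1/2}`, which is open already for pointwise convergence.
-/

namespace SorgenfreyLine

theorem isTopologicalBasis_Ico :
    TopologicalSpace.IsTopologicalBasis {s : Set ℝₗ | ∃ a b : ℝₗ, a < b ∧ s = Ico a b} where
  exists_subset_inter := by
    rintro _ ⟨a, b, -, rfl⟩ _ ⟨c, d, -, rfl⟩ x ⟨⟨hax, hxb⟩, ⟨hcx, hxd⟩⟩
    refine ⟨Ico x (min b d), ⟨x, min b d, lt_min hxb hxd, rfl⟩, ⟨le_rfl, lt_min hxb hxd⟩, ?_⟩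
    rintro y ⟨hxy, hy⟩
    exact ⟨⟨hax.trans hxy, hy.trans_le (min_le_left _ _)⟩,
      ⟨hcx.trans hxy, hy.trans_le (min_le_right _ _)⟩⟩
  sUnion_eq := eq_univ_of_forall fun x => ⟨Ico x (x + 1), ⟨x, x + 1, lt_add_one x, rfl⟩,
    le_rfl, lt_add_one x⟩
  eq_generateFrom := rfl

theorem nhds_basis_Ico_s9 (x : ℝₗ) : (𝓝 x).HasBasis (x < ·) (Ico x) where
  mem_iff' s := by
    rw [isTopologicalBasis_Ico.mem_nhds_iff]
    constructor
    · rintro ⟨_, ⟨a, b, -, rfl⟩, ⟨hax, hxb⟩, hs⟩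
      exact ⟨b, hxb, fun y hy => hs ⟨hax.trans hy.1, hy.2⟩⟩
    · rintro ⟨b, hxb, hs⟩
      exact ⟨Ico x b, ⟨x, b, hxb, rfl⟩, ⟨le_rfl, hxb⟩, hs⟩

theorem isOpen_Ici (a : ℝₗ) : IsOpen (Ici a) :=
  isOpen_iff_mem_nhds.2 fun x hx => (nhds_basis_Ico_s9 x).mem_iff.2
    ⟨x + 1, lt_add_one x, fun _ hy => le_trans hx hy.1⟩

theorem isOpen_Iio (a : ℝₗ) : IsOpen (Iio a) :=
  isOpen_iff_mem_nhds.2 fun x hx => (nhds_basis_Ico_s9 x).mem_iff.2 ⟨a, hx, fun _ hy => hy.2⟩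

theorem isClopen_Ici (a : ℝₗ) : IsClopen (Ici a) :=
  ⟨by simpa only [← compl_Iio, isClosed_compl_iff] using isOpen_Iio a, isOpen_Ici a⟩

instance : ContinuousAdd ℝₗ where
  continuous_add := continuous_iff_continuousAt.2 fun ⟨x, y⟩ => by
    rw [ContinuousAt, nhds_prod_eq,
      ((nhds_basis_Ico_s9 x).prod (nhds_basis_Ico_s9 y)).tendsto_iff (nhds_basis_Ico_s9 (x + y))]
    intro b hb
    refine ⟨(x + (b - (x + y)) / 2, y + (b - (x + y)) / 2), ⟨by dsimp only; linarith,
      by dsimp only; linarith⟩, ?_⟩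
    rintro ⟨u, v⟩ ⟨⟨hxu, hu⟩, ⟨hyv, hv⟩⟩
    exact ⟨add_le_add hxu hyv, by dsimp only at hu hv ⊢; linarith⟩

theorem isClopen_setOf_neg_le : IsClopen {p : ℝₗ × ℝₗ | -p.1 ≤ p.2} := by
  have h : {p : ℝₗ × ℝₗ | -p.1 ≤ p.2} = (fun p => p.1 + p.2) ⁻¹' Ici 0 := by
    ext p
    exact neg_le_iff_add_nonneg' (a := p.1)
  exact h ▸ (isClopen_Ici 0).preimage continuous_add

/-- The map `χ`, built by currying so that its continuity into `C_k(ℝₗ, ℝ)` is automatic. -/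
noncomputable def indicatorIciNeg : C(ℝₗ, C(ℝₗ, ℝ)) :=
  ContinuousMap.curry
    { toFun := fun p => if -p.1 ≤ p.2 then (1 : ℝ) else 0
      continuous_toFun :=
        (isClopen_setOf_neg_le.continuous_indicator (continuous_const (y := (1 : ℝ)))).congr
          fun p => by simp only [indicator_apply, mem_ofPred_eq] }

theorem indicatorIciNeg_apply (x t : ℝₗ) :
    indicatorIciNeg x t = if -x ≤ t then 1 else 0 :=
  rfl

theorem indicatorIciNeg_preimage_Ioi (a : ℝₗ) :
    {x | 1 / 2 < indicatorIciNeg x (-a)} = Ici a := by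
  ext x
  simp only [mem_ofPred_eq, mem_Ici, indicatorIciNeg_apply, neg_le_neg_iff]
  split_ifs with h <;> norm_num [h]

theorem indicatorIciNeg_preimage_Iio (b : ℝₗ) :
    {x | indicatorIciNeg x (-b) < 1 / 2} = Iio b := by
  ext x
  simp only [mem_ofPred_eq, mem_Iio, indicatorIciNeg_apply, neg_le_neg_iff]
  split_ifs with h <;> norm_num [h, not_le.1]

theorem isOpen_induced_Ico (a b : ℝₗ) :
    IsOpen[TopologicalSpace.induced indicatorIciNeg inferInstance] (Ico a b) := by
  refine ⟨{g | 1 / 2 < g (-a)} ∩ {g | g (-b) < 1 / 2},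
    (isOpen_lt continuous_const (continuous_eval_const _)).inter
      (isOpen_lt (continuous_eval_const _) continuous_const), ?_⟩
  rw [preimage_inter, ← Ici_inter_Iio, ← indicatorIciNeg_preimage_Ioi,
    ← indicatorIciNeg_preimage_Iio]
  rfl

theorem isEmbedding_indicatorIciNeg : IsEmbedding indicatorIciNeg where
  eq_induced := le_antisymm (continuous_iff_le_induced.1 indicatorIciNeg.continuous)
    (le_generateFrom <| by rintro _ ⟨a, b, -, rfl⟩; exact isOpen_induced_Ico a b)
  injective x y hxy := by
    have key (a : ℝₗ) : x ∈ Ici a ↔ y ∈ Ici a := by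
      simp only [← indicatorIciNeg_preimage_Ioi, mem_ofPred_eq, hxy]
    exact le_antisymm ((key x).1 self_mem_Ici) ((key y).2 self_mem_Ici)

end SorgenfreyLine

/-- The map assigning to $x$ the characteristic function of $[-x,\infty)$ is a well-defined
topological embedding of the Sorgenfrey line into $C_k(\mathbb{S},\mathbb{R})$. -/
theorem sorgenfrey_embeds_in_Ck :
    ∃ χ : ℝₗ → C(ℝₗ, ℝ),
      (∀ x t : ℝₗ, χ x t = if -x ≤ t then (1 : ℝ) else 0) ∧ IsEmbedding χ :=
  ⟨SorgenfreyLine.indicatorIciNeg, SorgenfreyLine.indicatorIciNeg_apply,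
    SorgenfreyLine.isEmbedding_indicatorIciNeg⟩
end
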